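/- arXiv:1905.12500 — 2 statements merged into one kernel-verified Lean document; each statement's English description precedes it below -/
import Mathlib

section
/- For every strongly stable fractional matching x̄ and every firm f, at most two entries of the row (x̄_{f,w})_{w∈W} are strictly between 0 and 1; moreover, if such fractional entries exist, there are exactly two of them, say for workers w_a and w_b, and x̄_{f,w_a} + x̄_{f,w_b} = 1, while all other positive entries of the row equal 1. -/
open Finset
open scoped Classical

/-- A many-to-one matching market: firms `F`, workers `W`, quotas `q`,
strict preference relations of firms over individual workers and of workers
over firms, and acceptability predicates. -/
structure Market (F W : Type*) where
  q : F → ℕ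
  qpos : ∀ f, 1 ≤ q f
  prefF : F → W → W → Prop
  prefW : W → F → F → Prop
  accF : F → W → Prop
  accW : W → F → Prop
  prefF_trans : ∀ f, Transitive (prefF f)
  prefF_irrefl : ∀ f w, ¬ prefF f w w
  prefF_total : ∀ f j w, j ≠ w → prefF f j w ∨ prefF f w j
  prefW_trans : ∀ w, Transitive (prefW w)
  prefW_irrefl : ∀ w f, ¬ prefW w f f
  prefW_total : ∀ w i f, i ≠ f → prefW w i f ∨ prefW w f i

namespace Market

variable {F W : Type*} [Fintype F] [Fintype W] (M : Market F W)

def acceptable (f : F) (w : W) : Prop := M.accF f w ∧ M.accW w f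

def weakF (f : F) (j w : W) : Prop := M.prefF f j w ∨ j = w

def weakW (w : W) (i f : F) : Prop := M.prefW w i f ∨ i = f

noncomputable def rowSumAbove (x : F → W → ℝ) (f : F) (w : W) : ℝ :=
  ∑ j ∈ univ.filter (fun j => M.weakF f j w), x f j

noncomputable def rowSumStrict (x : F → W → ℝ) (f : F) (w : W) : ℝ :=
  ∑ j ∈ univ.filter (fun j => M.prefF f j w), x f j

noncomputable def colSumAbove (x : F → W → ℝ) (w : W) (f : F) : ℝ :=
  ∑ i ∈ univ.filter (fun i => M.weakW w i f), x i w

noncomputable def colSumStrict (x : F → W → ℝ) (w : W) (f : F) : ℝ :=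
  ∑ i ∈ univ.filter (fun i => M.prefW w i f), x i w

/-- The SCP linear system: nonnegativity, firm capacity, worker capacity,
zero on unacceptable pairs, and the stability inequality on acceptable pairs. -/
def SCP (x : F → W → ℝ) : Prop :=
  (∀ f w, 0 ≤ x f w) ∧
  (∀ f, ∑ j, x f j ≤ (M.q f : ℝ)) ∧
  (∀ w, ∑ i, x i w ≤ 1) ∧
  (∀ f w, ¬ M.acceptable f w → x f w = 0) ∧
  (∀ f w, M.acceptable f w →
    (M.q f : ℝ) ≤
      M.rowSumStrict x f w + (M.q f : ℝ) * M.colSumStrict x w f + (M.q f : ℝ) * x f w)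

/-- The strong stability condition at a pair `(f, w)`. -/
def StrongCondAt (x : F → W → ℝ) (f : F) (w : W) : Prop :=
  ((M.q f : ℝ) - M.rowSumAbove x f w) * (1 - M.colSumAbove x w f) = 0

/-- A strongly stable fractional matching. -/
def StronglyStable (x : F → W → ℝ) : Prop :=
  M.SCP x ∧ ∀ f w, M.acceptable f w → M.StrongCondAt x f w

def isMatching (μ : F → Finset W) : Prop :=
  (∀ f, (μ f).card ≤ M.q f) ∧ ∀ w f f', w ∈ μ f → w ∈ μ f' → f = f'

def indivRational (μ : F → Finset W) : Prop := ∀ f w, w ∈ μ f → M.acceptable f w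

def blocks (μ : F → Finset W) (f : F) (w : W) : Prop :=
  w ∉ μ f ∧ M.acceptable f w ∧ (∀ f', w ∈ μ f' → M.prefW w f f') ∧
    ((μ f).card < M.q f ∨ ∃ w' ∈ μ f, M.prefF f w w')

def isStable (μ : F → Finset W) : Prop :=
  M.isMatching μ ∧ M.indivRational μ ∧ ∀ f w, ¬ M.blocks μ f w

noncomputable def incidence (_m : Market F W) (μ : F → Finset W) : F → W → ℝ :=
  fun f w => if w ∈ μ f then 1 else 0

def firmWeakDom (x y : F → W → ℝ) (f : F) : Prop :=
  ∀ w, M.rowSumAbove y f w ≤ M.rowSumAbove x f w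

/-- All firms weakly prefer `x` to `y`, at least one strictly. -/
def firmsPrefer (x y : F → W → ℝ) : Prop :=
  (∀ f, M.firmWeakDom x y f) ∧ ∃ f w, M.rowSumAbove y f w < M.rowSumAbove x f w

end Market


set_option linter.unusedSectionVars false

section Aux

variable {F W : Type*} [Fintype F] [Fintype W] {M : Market F W} {x : F → W → ℝ}

/-- `GoodPair f w`: `x f w` fractional, row of `f` is full, and `w` is the
row-minimum of `f`'s support. -/
def GoodPair (M : Market F W) (x : F → W → ℝ) (f : F) (w : W) : Prop :=
  0 < x f w ∧ x f w < 1 ∧ (∑ j, x f j) = (M.q f : ℝ) ∧ ∀ j, 0 < x f j → M.weakF f j w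

lemma weakF_antisymm {f : F} {j w : W} (h1 : M.weakF f j w) (h2 : M.weakF f w j) :
    j = w := by
  rcases h1 with h1 | h1
  · rcases h2 with h2 | h2
    · exact absurd (M.prefF_trans f h1 h2) (M.prefF_irrefl f j)
    · exact h2.symm
  · exact h1

lemma weakW_antisymm {w : W} {i f : F} (h1 : M.weakW w i f) (h2 : M.weakW w f i) :
    i = f := by
  rcases h1 with h1 | h1
  · rcases h2 with h2 | h2
    · exact absurd (M.prefW_trans w h1 h2) (M.prefW_irrefl w i)
    · exact h2.symm
  · exact h1

lemma not_weakF_rev {f : F} {j w : W} (h : M.prefF f j w) : ¬ M.weakF f w j := by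
  rintro (h' | rfl)
  · exact M.prefF_irrefl f w (M.prefF_trans f h' h)
  · exact M.prefF_irrefl f _ h

lemma not_weakW_rev {w : W} {i f : F} (h : M.prefW w i f) : ¬ M.weakW w f i := by
  rintro (h' | rfl)
  · exact M.prefW_irrefl w f (M.prefW_trans w h' h)
  · exact M.prefW_irrefl w _ h

lemma rowSumAbove_le_rowSum (hx : M.StronglyStable x) (f : F) (w : W) :
    M.rowSumAbove x f w ≤ ∑ j, x f j := by
  have := hx.1.1
  exact sum_le_sum_of_subset_of_nonneg (filter_subset _ _) (fun j _ _ => this f j)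

lemma colSumAbove_le_colSum (hx : M.StronglyStable x) (w : W) (f : F) :
    M.colSumAbove x w f ≤ ∑ i, x i w := by
  have := hx.1.1
  exact sum_le_sum_of_subset_of_nonneg (filter_subset _ _) (fun i _ _ => this i w)

lemma dichotomy (hx : M.StronglyStable x) {f : F} {w : W} (hpos : 0 < x f w) :
    M.rowSumAbove x f w = (M.q f : ℝ) ∨ M.colSumAbove x w f = 1 := by
  have hacc : M.acceptable f w := by
    by_contra hno
    exact absurd (hx.1.2.2.2.1 f w hno) (ne_of_gt hpos)
  have hsc := hx.2 f w hacc
  rcases mul_eq_zero.1 hsc with h | h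
  · exact Or.inl (sub_eq_zero.1 h).symm
  · exact Or.inr (sub_eq_zero.1 h).symm

lemma row_case (hx : M.StronglyStable x) {f : F} {w : W}
    (h : M.rowSumAbove x f w = (M.q f : ℝ)) :
    (∑ j, x f j) = (M.q f : ℝ) ∧ ∀ j, 0 < x f j → M.weakF f j w := by
  have hnn := hx.1.1
  have hle := rowSumAbove_le_rowSum hx f w
  have hcap := hx.1.2.1 f
  have hfull : (∑ j, x f j) = (M.q f : ℝ) := le_antisymm hcap (h ▸ hle)
  refine ⟨hfull, ?_⟩
  intro j hj
  by_contra hw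
  have hsplit := sum_filter_add_sum_filter_not univ (fun j => M.weakF f j w) (x f)
  have hrw : M.rowSumAbove x f w = ∑ j ∈ univ.filter (fun j => M.weakF f j w), x f j := rfl
  have hz : ∑ j ∈ univ.filter (fun j => ¬ M.weakF f j w), x f j = 0 := by
    rw [hrw] at h; linarith
  have := (sum_eq_zero_iff_of_nonneg (fun i _ => hnn f i)).1 hz j
    (mem_filter.2 ⟨mem_univ j, hw⟩)
  exact absurd this (ne_of_gt hj)

lemma col_case (hx : M.StronglyStable x) {f : F} {w : W}
    (h : M.colSumAbove x w f = 1) :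
    (∑ i, x i w) = 1 ∧ ∀ i, 0 < x i w → M.weakW w i f := by
  have hnn := hx.1.1
  have hle := colSumAbove_le_colSum hx w f
  have hcap := hx.1.2.2.1 w
  have hfull : (∑ i, x i w) = 1 := le_antisymm hcap (h ▸ hle)
  refine ⟨hfull, ?_⟩
  intro i hi
  by_contra hw
  have hsplit := sum_filter_add_sum_filter_not univ (fun i => M.weakW w i f) (fun i => x i w)
  have hrw : M.colSumAbove x w f = ∑ i ∈ univ.filter (fun i => M.weakW w i f), x i w := rfl
  have hz : ∑ i ∈ univ.filter (fun i => ¬ M.weakW w i f), x i w = 0 := by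
    rw [hrw] at h; linarith
  have := (sum_eq_zero_iff_of_nonneg (fun i _ => hnn i w)).1 hz i
    (mem_filter.2 ⟨mem_univ i, hw⟩)
  exact absurd this (ne_of_gt hi)



lemma x_le_one (hx : M.StronglyStable x) (f : F) (w : W) : x f w ≤ 1 := by
  refine le_trans ?_ (hx.1.2.2.1 w)
  exact Finset.single_le_sum (fun i _ => hx.1.1 i w) (mem_univ f)

/-- In a full row with a fractional entry there is a second fractional entry. -/
lemma second_frac_row (hx : M.StronglyStable x) {f : F} {u : W}
    (hfull : (∑ j, x f j) = (M.q f : ℝ)) (hpos : 0 < x f u) (hlt : x f u < 1) :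
    ∃ u', u' ≠ u ∧ 0 < x f u' ∧ x f u' < 1 := by
  by_contra hno
  push_neg at hno
  have hnn := hx.1.1
  -- every other positive entry equals 1
  have hone : ∀ j ∈ univ.erase u, 0 < x f j → x f j = 1 := by
    intro j hj hjpos
    have hne : j ≠ u := (mem_erase.1 hj).1
    have := hno j hne hjpos
    exact le_antisymm (x_le_one hx f j) this
  have hsplit : x f u + ∑ j ∈ univ.erase u, x f j = ∑ j, x f j :=
    Finset.add_sum_erase _ _ (mem_univ u)
  have hcount : ∑ j ∈ univ.erase u, x f j =
      (((univ.erase u).filter (fun j => 0 < x f j)).card : ℝ) := by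
    rw [← sum_filter_add_sum_filter_not (univ.erase u) (fun j => 0 < x f j) (x f)]
    have h1 : ∑ j ∈ (univ.erase u).filter (fun j => 0 < x f j), x f j =
        (((univ.erase u).filter (fun j => 0 < x f j)).card : ℝ) := by
      rw [Finset.sum_congr rfl (fun j hj => hone j (mem_filter.1 hj).1 (mem_filter.1 hj).2)]
      simp
    have h2 : ∑ j ∈ (univ.erase u).filter (fun j => ¬ 0 < x f j), x f j = 0 :=
      Finset.sum_eq_zero (fun j hj =>
        le_antisymm (not_lt.1 (mem_filter.1 hj).2) (hnn f j))
    rw [h1, h2, add_zero]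
  set k := ((univ.erase u).filter (fun j => 0 < x f j)).card with hk
  have heq : x f u + (k : ℝ) = (M.q f : ℝ) := by rw [← hfull, ← hsplit, hcount]
  have h1 : (k : ℝ) < (M.q f : ℝ) := by linarith
  have h2 : (M.q f : ℝ) < (k : ℝ) + 1 := by linarith
  have h1' : k < M.q f := by exact_mod_cast h1
  have h2' : M.q f < k + 1 := by exact_mod_cast h2
  omega

/-- In a full column with a fractional entry there is a second fractional entry. -/
lemma second_frac_col (hx : M.StronglyStable x) {f : F} {w : W}
    (hfull : (∑ i, x i w) = 1) (hpos : 0 < x f w) (hlt : x f w < 1) :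
    ∃ g, g ≠ f ∧ 0 < x g w ∧ x g w < 1 := by
  have hnn := hx.1.1
  have hsplit : x f w + ∑ i ∈ univ.erase f, x i w = ∑ i, x i w :=
    Finset.add_sum_erase _ (fun i => x i w) (mem_univ f)
  have hrest : 0 < ∑ i ∈ univ.erase f, x i w := by linarith
  obtain ⟨g, hg, hgpos⟩ : ∃ g ∈ univ.erase f, 0 < x g w := by
    by_contra hall
    push_neg at hall
    have : ∑ i ∈ univ.erase f, x i w ≤ 0 :=
      Finset.sum_nonpos (fun i hi => hall i hi)
    linarith
  refine ⟨g, (mem_erase.1 hg).1, hgpos, ?_⟩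
  have hpair : x f w + x g w ≤ ∑ i, x i w := by
    have : ∑ i ∈ ({f, g} : Finset F), x i w ≤ ∑ i, x i w :=
      sum_le_sum_of_subset_of_nonneg (subset_univ _) (fun i _ _ => hnn i w)
    rwa [Finset.sum_pair (Ne.symm (mem_erase.1 hg).1)] at this
  linarith

/-- The chain step: from a good pair we reach a new good pair on a worker
whose column is full with the old firm as column minimum. -/
lemma chain_step (hx : M.StronglyStable x) {g : F} {u : W} (hg : GoodPair M x g u) :
    ∃ g' u', GoodPair M x g' u' ∧ 0 < x g u' ∧
      (∀ i, 0 < x i u' → M.weakW u' i g) ∧ (∑ i, x i u') = 1 := by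
  obtain ⟨hpos, hlt, hfull, hmin⟩ := hg
  obtain ⟨u', hne, hu'pos, hu'lt⟩ := second_frac_row hx hfull hpos hlt
  have hpref : M.prefF g u' u := (hmin u' hu'pos).resolve_right hne
  have hnw : ¬ M.weakF g u u' := not_weakF_rev hpref
  have hrsa : M.rowSumAbove x g u' < (M.q g : ℝ) := by
    have hsub : univ.filter (fun j => M.weakF g j u') ⊆ univ.erase u := by
      intro j hj
      obtain ⟨_, hj2⟩ := mem_filter.1 hj
      exact mem_erase.2 ⟨fun h => hnw (h ▸ hj2), mem_univ j⟩
    have h1 : M.rowSumAbove x g u' ≤ ∑ j ∈ univ.erase u, x g j :=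
      sum_le_sum_of_subset_of_nonneg hsub (fun j _ _ => hx.1.1 g j)
    have h2 : x g u + ∑ j ∈ univ.erase u, x g j = ∑ j, x g j :=
      Finset.add_sum_erase _ _ (mem_univ u)
    have h3 : (∑ j, x g j) = (M.q g : ℝ) := hfull
    linarith
  have hcol : M.colSumAbove x u' g = 1 :=
    (dichotomy hx hu'pos).resolve_left (ne_of_lt hrsa)
  obtain ⟨hcfull, hcmin⟩ := col_case hx hcol
  obtain ⟨g', hgne, hg'pos, hg'lt⟩ := second_frac_col hx hcfull hu'pos hu'lt
  have hprefW : M.prefW u' g' g := (hcmin g' hg'pos).resolve_right hgne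
  have hnww : ¬ M.weakW u' g g' := not_weakW_rev hprefW
  have hcsa : M.colSumAbove x u' g' < 1 := by
    have hsub : univ.filter (fun i => M.weakW u' i g') ⊆ univ.erase g := by
      intro i hi
      obtain ⟨_, hi2⟩ := mem_filter.1 hi
      exact mem_erase.2 ⟨fun h => hnww (h ▸ hi2), mem_univ i⟩
    have h1 : M.colSumAbove x u' g' ≤ ∑ i ∈ univ.erase g, x i u' :=
      sum_le_sum_of_subset_of_nonneg hsub (fun i _ _ => hx.1.1 i u')
    have h2 : x g u' + ∑ i ∈ univ.erase g, x i u' = ∑ i, x i u' :=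
      Finset.add_sum_erase _ (fun i => x i u') (mem_univ g)
    linarith
  have hrow : M.rowSumAbove x g' u' = (M.q g' : ℝ) :=
    (dichotomy hx hg'pos).resolve_right (ne_of_lt hcsa)
  obtain ⟨hg'full, hg'min⟩ := row_case hx hrow
  exact ⟨g', u', ⟨hg'pos, hg'lt, hg'full, hg'min⟩, hu'pos, hcmin, hcfull⟩



/-- The key chain lemma: from any good pair, the column of its worker is full
and admits a column-minimal firm with a full row. -/
lemma key_lemma (hx : M.StronglyStable x) {f0 : F} {w0 : W}
    (h0 : GoodPair M x f0 w0) :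
    (∑ i, x i w0) = 1 ∧ ∃ g, 0 < x g w0 ∧ (∀ i, 0 < x i w0 → M.weakW w0 i g) ∧
      (∑ j, x g j) = (M.q g : ℝ) := by
  classical
  let T := {p : F × W // GoodPair M x p.1 p.2}
  have hstep : ∀ p : T, ∃ p' : T,
      0 < x p.1.1 p'.1.2 ∧ (∀ i, 0 < x i p'.1.2 → M.weakW p'.1.2 i p.1.1) ∧
      (∑ i, x i p'.1.2) = 1 := by
    rintro ⟨⟨g, u⟩, hg⟩
    obtain ⟨g', u', h1, h2, h3, h4⟩ := chain_step hx hg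
    exact ⟨⟨(g', u'), h1⟩, h2, h3, h4⟩
  let s : ℕ → T := fun k => Nat.rec ⟨(f0, w0), h0⟩ (fun _ p => (hstep p).choose) k
  have hlink : ∀ k, 0 < x (s k).1.1 (s (k+1)).1.2 ∧
      (∀ i, 0 < x i (s (k+1)).1.2 → M.weakW (s (k+1)).1.2 i (s k).1.1) ∧
      (∑ i, x i (s (k+1)).1.2) = 1 := fun k => (hstep (s k)).choose_spec
  obtain ⟨a, b, hab, heq⟩ := Finite.exists_ne_map_eq_of_infinite (fun k => (s k).1.2)
  have hK : ∃ k, ∃ j, k < j ∧ (s j).1.2 = (s k).1.2 := by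
    rcases lt_or_gt_of_ne hab with h | h
    · exact ⟨a, b, h, heq.symm⟩
    · exact ⟨b, a, h, heq⟩
  obtain ⟨j, hkj, hjeq⟩ := Nat.find_spec hK
  have hmin0 : Nat.find hK = 0 := by
    by_contra hne0
    obtain ⟨m, hm⟩ : ∃ m, Nat.find hK = m + 1 := ⟨Nat.find hK - 1, by omega⟩
    obtain ⟨jj, hjj⟩ : ∃ jj, j = jj + 1 := ⟨j - 1, by omega⟩
    subst hjj
    rw [hm] at hjeq
    -- two links into the same worker: the previous firms agree
    have hl1 := hlink m
    have hl2 := hlink jj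
    have hf1 : M.weakW ((s (m+1)).1.2) ((s jj).1.1) ((s m).1.1) :=
      hl1.2.1 _ (hjeq ▸ hl2.1)
    have hf2 : M.weakW ((s (m+1)).1.2) ((s m).1.1) ((s jj).1.1) := by
      have := hl2.2.1 ((s m).1.1) (by rw [hjeq]; exact hl1.1)
      rwa [hjeq] at this
    have hfeq : (s jj).1.1 = (s m).1.1 := weakW_antisymm hf1 hf2
    -- row minimality: the previous workers agree
    have hg1 := (s jj).2
    have hg2 := (s m).2
    have e1 : M.weakF ((s m).1.1) ((s jj).1.2) ((s m).1.2) :=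
      hg2.2.2.2 _ (by rw [← hfeq]; exact hg1.1)
    have e2 : M.weakF ((s m).1.1) ((s m).1.2) ((s jj).1.2) := by
      have := hg1.2.2.2 ((s m).1.2) (by rw [hfeq]; exact hg2.1)
      rwa [hfeq] at this
    have hweq : (s jj).1.2 = (s m).1.2 := weakF_antisymm e1 e2
    have hmlt : m < jj := by omega
    exact absurd ⟨jj, hmlt, hweq⟩ (Nat.find_min hK (by omega))
  rw [hmin0] at hjeq hkj
  obtain ⟨jj, hjj⟩ : ∃ jj, j = jj + 1 := ⟨j - 1, by omega⟩
  subst hjj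
  have hl := hlink jj
  have hwe : (s (jj+1)).1.2 = w0 := hjeq
  rw [hwe] at hl
  exact ⟨hl.2.2, (s jj).1.1, hl.1, hl.2.1, (s jj).2.2.2.1⟩

/-- Every fractional entry lies in a full column. -/
lemma col_full (hx : M.StronglyStable x) {f : F} {w : W}
    (hpos : 0 < x f w) (hlt : x f w < 1) : (∑ i, x i w) = 1 := by
  by_contra hne
  have hlt1 : (∑ i, x i w) < 1 := lt_of_le_of_ne (hx.1.2.2.1 w) hne
  have hcsa : M.colSumAbove x w f < 1 :=
    lt_of_le_of_lt (colSumAbove_le_colSum hx w f) hlt1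
  have hrow : M.rowSumAbove x f w = (M.q f : ℝ) :=
    (dichotomy hx hpos).resolve_right (ne_of_lt hcsa)
  obtain ⟨hfull, hmin⟩ := row_case hx hrow
  exact absurd (key_lemma hx ⟨hpos, hlt, hfull, hmin⟩).1 hne

/-- Every fractional entry lies in a full row. -/
lemma row_full (hx : M.StronglyStable x) {f : F} {w : W}
    (hpos : 0 < x f w) (hlt : x f w < 1) : (∑ j, x f j) = (M.q f : ℝ) := by
  by_contra hne
  have hltq : (∑ j, x f j) < (M.q f : ℝ) := lt_of_le_of_ne (hx.1.2.1 f) hne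
  have hrsa : M.rowSumAbove x f w < (M.q f : ℝ) :=
    lt_of_le_of_lt (rowSumAbove_le_rowSum hx f w) hltq
  have hcol : M.colSumAbove x w f = 1 :=
    (dichotomy hx hpos).resolve_left (ne_of_lt hrsa)
  obtain ⟨hcfull, hcmin⟩ := col_case hx hcol
  obtain ⟨g, hgne, hgpos, hglt⟩ := second_frac_col hx hcfull hpos hlt
  have hprefW : M.prefW w g f := (hcmin g hgpos).resolve_right hgne
  have hnww : ¬ M.weakW w f g := not_weakW_rev hprefW
  have hcsa : M.colSumAbove x w g < 1 := by
    have hsub : univ.filter (fun i => M.weakW w i g) ⊆ univ.erase f := by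
      intro i hi
      obtain ⟨_, hi2⟩ := mem_filter.1 hi
      exact mem_erase.2 ⟨fun h => hnww (h ▸ hi2), mem_univ i⟩
    have h1 : M.colSumAbove x w g ≤ ∑ i ∈ univ.erase f, x i w :=
      sum_le_sum_of_subset_of_nonneg hsub (fun i _ _ => hx.1.1 i w)
    have h2 : x f w + ∑ i ∈ univ.erase f, x i w = ∑ i, x i w :=
      Finset.add_sum_erase _ (fun i => x i w) (mem_univ f)
    linarith
  have hrow : M.rowSumAbove x g w = (M.q g : ℝ) :=
    (dichotomy hx hgpos).resolve_right (ne_of_lt hcsa)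
  obtain ⟨hgfull, hgmin⟩ := row_case hx hrow
  obtain ⟨_, g', hg'pos, hg'min, hg'full⟩ := key_lemma hx ⟨hgpos, hglt, hgfull, hgmin⟩
  -- both f and g' are column-minimal in column w, so they are equal
  have : g' = f := weakW_antisymm (hcmin g' hg'pos) (hg'min f hpos)
  rw [this] at hg'full
  exact hne hg'full



/-- Every nonempty fractional row has exactly two fractional entries. -/
lemma row_card_two (hx : M.StronglyStable x) (f : F)
    (hne : (univ.filter (fun w => 0 < x f w ∧ x f w < 1)).Nonempty) :
    (univ.filter (fun w => 0 < x f w ∧ x f w < 1)).card = 2 := by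
  classical
  set FrSet : Finset (F × W) :=
    univ.filter (fun p => 0 < x p.1 p.2 ∧ x p.1 p.2 < 1) with hFrSet
  set rowF : F → Finset W :=
    fun g => univ.filter (fun w => 0 < x g w ∧ x g w < 1) with hrowF
  set colF : W → Finset F :=
    fun w => univ.filter (fun g => 0 < x g w ∧ x g w < 1) with hcolF
  set R : Finset F := univ.filter (fun g => (rowF g).Nonempty) with hR
  set C : Finset W := univ.filter (fun w => (colF w).Nonempty) with hC
  set A : Finset (F × W) :=
    FrSet.filter (fun p => ∀ j, 0 < x p.1 j → M.weakF p.1 j p.2) with hA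
  -- members of FrSet \ A are column-minimal
  have hBcol : ∀ p ∈ FrSet \ A, ∀ i, 0 < x i p.2 → M.weakW p.2 i p.1 := by
    intro p hp
    obtain ⟨hp1, hp2⟩ := mem_sdiff.1 hp
    obtain ⟨-, hpos, hlt⟩ := mem_filter.1 hp1
    rcases dichotomy hx hpos with h | h
    · exact absurd (mem_filter.2 ⟨hp1, (row_case hx h).2⟩) hp2
    · exact (col_case hx h).2
  -- |A| ≤ |R|
  have hAcard : A.card ≤ R.card := by
    refine Finset.card_le_card_of_injOn Prod.fst ?_ ?_
    · intro p hp
      obtain ⟨hp1, -⟩ := mem_filter.1 hp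
      obtain ⟨-, hpos, hlt⟩ := mem_filter.1 hp1
      exact mem_filter.2 ⟨mem_univ _, ⟨p.2, mem_filter.2 ⟨mem_univ _, hpos, hlt⟩⟩⟩
    · intro p hp p' hp' hfe
      obtain ⟨hp1, hmin⟩ := mem_filter.1 hp
      obtain ⟨hp1', hmin'⟩ := mem_filter.1 hp'
      obtain ⟨-, hpos, -⟩ := mem_filter.1 hp1
      obtain ⟨-, hpos', -⟩ := mem_filter.1 hp1'
      have e1 : M.weakF p.1 p'.2 p.2 := hmin p'.2 (by rw [hfe]; exact hpos')
      have e2 : M.weakF p.1 p.2 p'.2 := by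
        have := hmin' p.2 (by rw [← hfe]; exact hpos)
        rwa [← hfe] at this
      have : p'.2 = p.2 := weakF_antisymm e1 e2
      exact Prod.ext hfe this.symm
  -- |FrSet \ A| ≤ |C|
  have hBcard : (FrSet \ A).card ≤ C.card := by
    refine Finset.card_le_card_of_injOn Prod.snd ?_ ?_
    · intro p hp
      obtain ⟨hp1, -⟩ := mem_sdiff.1 hp
      obtain ⟨-, hpos, hlt⟩ := mem_filter.1 hp1
      exact mem_filter.2 ⟨mem_univ _, ⟨p.1, mem_filter.2 ⟨mem_univ _, hpos, hlt⟩⟩⟩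
    · intro p hp p' hp' hfe
      obtain ⟨hp1, -⟩ := mem_sdiff.1 hp
      obtain ⟨hp1', -⟩ := mem_sdiff.1 hp'
      obtain ⟨-, hpos, -⟩ := mem_filter.1 hp1
      obtain ⟨-, hpos', -⟩ := mem_filter.1 hp1'
      have e1 : M.weakW p.2 p'.1 p.1 := hBcol p hp p'.1 (by rw [hfe]; exact hpos')
      have e2 : M.weakW p.2 p.1 p'.1 := by
        have := hBcol p' hp' p.1 (by rw [← hfe]; exact hpos)
        rwa [← hfe] at this
      have : p'.1 = p.1 := weakW_antisymm e1 e2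
      exact Prod.ext this.symm hfe
  have hsplitAB : (FrSet \ A).card + A.card = FrSet.card :=
    Finset.card_sdiff_add_card_eq_card (filter_subset _ _)
  -- fiberwise counts
  have hrowfiber : FrSet.card = ∑ g ∈ R, (rowF g).card := by
    rw [Finset.card_eq_sum_card_fiberwise (f := Prod.fst) (t := R) ?_]
    · refine Finset.sum_congr rfl ?_
      intro g hg
      refine Finset.card_bij (fun p _ => p.2) ?_ ?_ ?_
      · intro p hp
        obtain ⟨hp1, hp2⟩ := mem_filter.1 hp
        obtain ⟨-, hpos, hlt⟩ := mem_filter.1 hp1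
        exact mem_filter.2 ⟨mem_univ _, hp2 ▸ hpos, hp2 ▸ hlt⟩
      · intro p hp p' hp' hpe
        have h1 := (mem_filter.1 hp).2
        have h2 := (mem_filter.1 hp').2
        exact Prod.ext (h1.trans h2.symm) hpe
      · intro w hw
        obtain ⟨-, hpos, hlt⟩ := mem_filter.1 hw
        exact ⟨(g, w), mem_filter.2 ⟨mem_filter.2 ⟨mem_univ _, hpos, hlt⟩, rfl⟩, rfl⟩
    · intro p hp
      obtain ⟨-, hpos, hlt⟩ := mem_filter.1 hp
      exact mem_filter.2 ⟨mem_univ _, ⟨p.2, mem_filter.2 ⟨mem_univ _, hpos, hlt⟩⟩⟩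
  have hcolfiber : FrSet.card = ∑ w ∈ C, (colF w).card := by
    rw [Finset.card_eq_sum_card_fiberwise (f := Prod.snd) (t := C) ?_]
    · refine Finset.sum_congr rfl ?_
      intro w hw
      refine Finset.card_bij (fun p _ => p.1) ?_ ?_ ?_
      · intro p hp
        obtain ⟨hp1, hp2⟩ := mem_filter.1 hp
        obtain ⟨-, hpos, hlt⟩ := mem_filter.1 hp1
        exact mem_filter.2 ⟨mem_univ _, hp2 ▸ hpos, hp2 ▸ hlt⟩
      · intro p hp p' hp' hpe
        have h1 := (mem_filter.1 hp).2
        have h2 := (mem_filter.1 hp').2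
        exact Prod.ext hpe (h1.trans h2.symm)
      · intro g hg
        obtain ⟨-, hpos, hlt⟩ := mem_filter.1 hg
        exact ⟨(g, w), mem_filter.2 ⟨mem_filter.2 ⟨mem_univ _, hpos, hlt⟩, rfl⟩, rfl⟩
    · intro p hp
      obtain ⟨-, hpos, hlt⟩ := mem_filter.1 hp
      exact mem_filter.2 ⟨mem_univ _, ⟨p.1, mem_filter.2 ⟨mem_univ _, hpos, hlt⟩⟩⟩
  -- every fractional row/column has at least two fractional entries
  have hR2 : ∀ g ∈ R, 2 ≤ (rowF g).card := by
    intro g hg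
    obtain ⟨w, hw⟩ := (mem_filter.1 hg).2
    obtain ⟨-, hpos, hlt⟩ := mem_filter.1 hw
    obtain ⟨w', hne', hpos', hlt'⟩ :=
      second_frac_row hx (row_full hx hpos hlt) hpos hlt
    exact Finset.one_lt_card.2 ⟨w', mem_filter.2 ⟨mem_univ _, hpos', hlt'⟩, w, hw, hne'⟩
  have hC2 : ∀ w ∈ C, 2 ≤ (colF w).card := by
    intro w hw
    obtain ⟨g, hg⟩ := (mem_filter.1 hw).2
    obtain ⟨-, hpos, hlt⟩ := mem_filter.1 hg
    obtain ⟨g', hne', hpos', hlt'⟩ :=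
      second_frac_col hx (col_full hx hpos hlt) hpos hlt
    exact Finset.one_lt_card.2 ⟨g', mem_filter.2 ⟨mem_univ _, hpos', hlt'⟩, g, hg, hne'⟩
  have hsumR : 2 * R.card ≤ FrSet.card := by
    rw [hrowfiber]
    have := Finset.card_nsmul_le_sum R (fun g => (rowF g).card) 2 hR2
    simpa [mul_comm] using this
  have hsumC : 2 * C.card ≤ FrSet.card := by
    rw [hcolfiber]
    have := Finset.card_nsmul_le_sum C (fun w => (colF w).card) 2 hC2
    simpa [mul_comm] using this
  have hRC : FrSet.card ≤ R.card + C.card := by omega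
  have hNeq : FrSet.card = 2 * R.card := by omega
  -- conclude exactness for our given f
  have hfR : f ∈ R := mem_filter.2 ⟨mem_univ _, hne⟩
  by_contra hcard
  have h2lt : 2 < (rowF f).card := lt_of_le_of_ne (hR2 f hfR) (Ne.symm hcard)
  have : ∑ g ∈ R, (2 : ℕ) < ∑ g ∈ R, (rowF g).card :=
    Finset.sum_lt_sum hR2 ⟨f, hfR, h2lt⟩
  rw [Finset.sum_const, smul_eq_mul] at this
  omega



end Aux

/-- In a strongly stable fractional matching, each firm's row has at most two
strictly fractional entries; if there are any, there are exactly two, they sum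
to one, and all other positive entries equal one. -/
theorem firm_row_almost_integral {F W : Type*} [Fintype F] [Fintype W]
    (M : Market F W) (x : F → W → ℝ) (hx : M.StronglyStable x) (f : F) :
    (univ.filter (fun w => 0 < x f w ∧ x f w < 1)).card ≤ 2 ∧
    ((univ.filter (fun w => 0 < x f w ∧ x f w < 1)).Nonempty →
      ∃ wa wb : W, wa ≠ wb ∧
        univ.filter (fun w => 0 < x f w ∧ x f w < 1) = {wa, wb} ∧
        x f wa + x f wb = 1 ∧
        ∀ w, 0 < x f w → w ≠ wa → w ≠ wb → x f w = 1) := by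
  classical
  constructor
  · rcases (univ.filter (fun w => 0 < x f w ∧ x f w < 1)).eq_empty_or_nonempty with h | h
    · simp [h]
    · exact le_of_eq (row_card_two hx f h)
  · intro hne
    have hcard := row_card_two hx f hne
    obtain ⟨wa, wb, hab, habeq⟩ := Finset.card_eq_two.1 hcard
    refine ⟨wa, wb, hab, habeq, ?_, ?_⟩
    · -- the two fractional entries sum to 1
      have hwa : wa ∈ univ.filter (fun w => 0 < x f w ∧ x f w < 1) := by
        rw [habeq]; exact mem_insert_self _ _
      have hwb : wb ∈ univ.filter (fun w => 0 < x f w ∧ x f w < 1) := by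
        rw [habeq]; exact mem_insert_of_mem (mem_singleton_self _)
      obtain ⟨-, hapos, halt⟩ := mem_filter.1 hwa
      obtain ⟨-, hbpos, hblt⟩ := mem_filter.1 hwb
      have hfull : (∑ j, x f j) = (M.q f : ℝ) := row_full hx hapos halt
      have hnn := hx.1.1
      have hsplit1 : x f wa + ∑ j ∈ univ.erase wa, x f j = ∑ j, x f j :=
        Finset.add_sum_erase _ (fun j => x f j) (mem_univ wa)
      have hwbmem : wb ∈ univ.erase wa := mem_erase.2 ⟨Ne.symm hab, mem_univ _⟩
      have hsplit2 : x f wb + ∑ j ∈ (univ.erase wa).erase wb, x f j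
          = ∑ j ∈ univ.erase wa, x f j :=
        Finset.add_sum_erase _ (fun j => x f j) hwbmem
      -- remaining positive entries equal 1
      have hone : ∀ j ∈ (univ.erase wa).erase wb, 0 < x f j → x f j = 1 := by
        intro j hj hjpos
        have hj1 : j ≠ wb := (mem_erase.1 hj).1
        have hj2 : j ≠ wa := (mem_erase.1 (mem_erase.1 hj).2).1
        have hnotfrac : j ∉ univ.filter (fun w => 0 < x f w ∧ x f w < 1) := by
          rw [habeq]
          simp [hj1, hj2]
        have : ¬ (0 < x f j ∧ x f j < 1) := fun hc => hnotfrac (mem_filter.2 ⟨mem_univ _, hc⟩)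
        have hge : ¬ x f j < 1 := fun hlt => this ⟨hjpos, hlt⟩
        exact le_antisymm (x_le_one hx f j) (not_lt.1 hge)
      have hcount : ∑ j ∈ (univ.erase wa).erase wb, x f j =
          ((((univ.erase wa).erase wb).filter (fun j => 0 < x f j)).card : ℝ) := by
        rw [← sum_filter_add_sum_filter_not ((univ.erase wa).erase wb)
          (fun j => 0 < x f j) (x f)]
        have h1 : ∑ j ∈ ((univ.erase wa).erase wb).filter (fun j => 0 < x f j), x f j =
            ((((univ.erase wa).erase wb).filter (fun j => 0 < x f j)).card : ℝ) := by
          rw [Finset.sum_congr rfl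
            (fun j hj => hone j (mem_filter.1 hj).1 (mem_filter.1 hj).2)]
          simp
        have h2 : ∑ j ∈ ((univ.erase wa).erase wb).filter (fun j => ¬ 0 < x f j), x f j = 0 :=
          Finset.sum_eq_zero (fun j hj =>
            le_antisymm (not_lt.1 (mem_filter.1 hj).2) (hnn f j))
        rw [h1, h2, add_zero]
      set k := (((univ.erase wa).erase wb).filter (fun j => 0 < x f j)).card with hk
      have heq : x f wa + x f wb + (k : ℝ) = (M.q f : ℝ) := by
        rw [← hfull, ← hsplit1, ← hsplit2, hcount]; ring
      have h1 : (k : ℝ) < (M.q f : ℝ) := by linarith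
      have h2 : (M.q f : ℝ) < (k : ℝ) + 2 := by linarith
      have h1' : k < M.q f := by exact_mod_cast h1
      have h2' : M.q f < k + 2 := by exact_mod_cast h2
      have hq : M.q f = k + 1 := by omega
      have : (M.q f : ℝ) = (k : ℝ) + 1 := by rw [hq]; push_cast; ring
      linarith
    · intro w hwpos hwa hwb
      have hnotfrac : w ∉ univ.filter (fun w => 0 < x f w ∧ x f w < 1) := by
        rw [habeq]; simp [hwa, hwb]
      have : ¬ (0 < x f w ∧ x f w < 1) := fun hc => hnotfrac (mem_filter.2 ⟨mem_univ _, hc⟩)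
      have hge : ¬ x f w < 1 := fun hlt => this ⟨hwpos, hlt⟩
      exact le_antisymm (x_le_one hx f w) (not_lt.1 hge)
end

section
/- In the 2-firm, 4-worker market of Example 1 (preferences ≻_{f1}: w1,w2,w3,w4; ≻_{f2}: w4,w3,w2,w1; ≻_{w1}=≻_{w2}=≻_{w3}: f2,f1; ≻_{w4}: f1,f2; quotas q_{f1}=q_{f2}=2), the matchings μ_F with μ_F(f1)={w1,w2}, μ_F(f2)={w3,w4} and μ_W with μ_W(f1)={w1,w4}, μ_W(f2)={w2,w3} are both stable, and every convex combination α·x^{μ_F} + (1−α)·x^{μ_W} with α ∈ [0,1] is a strongly stable fractional matching. -/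
open Finset
open scoped Classical

def exRF : Fin 2 → Fin 4 → ℕ := fun f w => if f = 0 then w.val else 3 - w.val

def exRW : Fin 4 → Fin 2 → ℕ := fun w f => if w = 3 then f.val else 1 - f.val

/-- The market of Example 1: two firms with quota 2 and four workers. -/
def exMarket : Market (Fin 2) (Fin 4) where
  q := fun _ => 2
  qpos := fun _ => by norm_num
  prefF := fun f j w => exRF f j < exRF f w
  prefW := fun w i f => exRW w i < exRW w f
  accF := fun _ _ => True
  accW := fun _ _ => True
  prefF_trans := fun _ _ _ _ h1 h2 => lt_trans h1 h2
  prefF_irrefl := fun _ _ => lt_irrefl _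
  prefF_total := by decide
  prefW_trans := fun _ _ _ _ h1 h2 => lt_trans h1 h2
  prefW_irrefl := fun _ _ => lt_irrefl _
  prefW_total := by decide

def exMuF : Fin 2 → Finset (Fin 4) := fun f => if f = 0 then {0, 1} else {2, 3}

def exMuW : Fin 2 → Finset (Fin 4) := fun f => if f = 0 then {0, 3} else {1, 2}

/-! Stable matchings have incidence vectors in the polytope `SCP`, which is convex, so every
mixture of `μ_F` and `μ_W` satisfies `SCP`. Along the segment both factors of the strong
stability product are affine in `α`. At each of the eight pairs `(f, w)` of the example the same
factor vanishes at both endpoints: either `f` is filled with workers it weakly prefers to `w` in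
both matchings, or `w` holds a firm it weakly prefers to `f` in both. That factor then vanishes
along the whole segment. -/

namespace Market

variable {F W : Type*} (M : Market F W)

def FirmFullAbove (μ : F → Finset W) (f : F) (w : W) : Prop :=
  (μ f).card = M.q f ∧ ∀ j ∈ μ f, M.weakF f j w

def WorkerMatchedAbove (μ : F → Finset W) (w : W) (f : F) : Prop :=
  ∃ i, w ∈ μ i ∧ M.weakW w i f

variable {M} {μ ν : F → Finset W}

theorem sum_incidence_row (s : Finset W) (f : F) :
    ∑ j ∈ s, M.incidence μ f j = (s.filter (· ∈ μ f)).card :=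
  Finset.sum_boole _ s

theorem sum_incidence_col (s : Finset F) (w : W) :
    ∑ i ∈ s, M.incidence μ i w = (s.filter (w ∈ μ ·)).card :=
  Finset.sum_boole _ s

theorem incidence_nonneg (f : F) (w : W) : 0 ≤ M.incidence μ f w := by
  unfold incidence
  split_ifs <;> norm_num

theorem rowSumAbove_incidence_of_firmFullAbove [Fintype W] {f : F} {w : W}
    (h : M.FirmFullAbove μ f w) : M.rowSumAbove (M.incidence μ) f w = M.q f := by
  rw [rowSumAbove, sum_incidence_row, Finset.filter_filter, ← h.1]
  congr 2
  ext j
  simpa using fun hj => h.2 j hj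

theorem colSumAbove_incidence_of_workerMatchedAbove [Fintype F] (hμ : M.isMatching μ)
    {f : F} {w : W} (h : M.WorkerMatchedAbove μ w f) : M.colSumAbove (M.incidence μ) w f = 1 := by
  obtain ⟨i, hwi, hi⟩ := h
  rw [colSumAbove, sum_incidence_col, Finset.filter_filter, Nat.cast_eq_one, Finset.card_eq_one]
  refine ⟨i, Finset.ext fun i' => ?_⟩
  simp only [Finset.mem_filter, Finset.mem_univ, true_and, Finset.mem_singleton]
  exact ⟨fun hi' => hμ.2 w i' i hi'.2 hwi, fun h => h ▸ ⟨hi, hwi⟩⟩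

theorem isStable.prefW_matched_or_firm_full (hμ : M.isStable μ) {f : F} {w : W}
    (hfw : M.acceptable f w) (hw : w ∉ μ f) :
    (∃ i, w ∈ μ i ∧ M.prefW w i f) ∨
      (M.q f ≤ (μ f).card ∧ ∀ j ∈ μ f, M.prefF f j w) := by
  by_cases hmatched : ∃ i, w ∈ μ i ∧ M.prefW w i f
  · exact Or.inl hmatched
  have hnb := hμ.2.2 f w
  simp only [blocks, not_and, not_or, not_exists, not_lt] at hnb
  obtain ⟨hcard, hworse⟩ := hnb hw hfw fun i hwi =>
    have hif : i ≠ f := fun hif => hw (hif ▸ hwi)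
    (M.prefW_total w f i hif.symm).resolve_right fun hi => hmatched ⟨i, hwi, hi⟩
  refine Or.inr ⟨hcard, fun j hj => ?_⟩
  have hjw : j ≠ w := fun hjw => hw (hjw ▸ hj)
  exact (M.prefF_total f j w hjw).resolve_right (hworse j hj)

variable [Fintype F] [Fintype W]

theorem isStable.scp_incidence (hμ : M.isStable μ) : M.SCP (M.incidence μ) := by
  refine ⟨incidence_nonneg, fun f => ?_, fun w => ?_, fun f w hfw => ?_, fun f w hfw => ?_⟩
  · rw [sum_incidence_row, Finset.filter_mem_eq_inter, Finset.univ_inter]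
    exact_mod_cast hμ.1.1 f
  · rw [sum_incidence_col]
    exact_mod_cast Finset.card_le_one.2 fun i hi i' hi' =>
      hμ.1.2 w i i' (Finset.mem_filter.1 hi).2 (Finset.mem_filter.1 hi').2
  · simp only [incidence, ite_eq_right_iff, one_ne_zero, imp_false]
    exact fun hw => hfw (hμ.2.1 f w hw)
  have hrow : 0 ≤ M.rowSumStrict (M.incidence μ) f w :=
    Finset.sum_nonneg fun _ _ => incidence_nonneg _ _
  have hcol : 0 ≤ M.colSumStrict (M.incidence μ) w f :=
    Finset.sum_nonneg fun _ _ => incidence_nonneg _ _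
  have hq : (0 : ℝ) ≤ M.q f := Nat.cast_nonneg _
  by_cases hw : w ∈ μ f
  · have : M.incidence μ f w = 1 := if_pos hw
    nlinarith
  have hself : M.incidence μ f w = 0 := if_neg hw
  rcases hμ.prefW_matched_or_firm_full hfw hw with ⟨i, hwi, hi⟩ | ⟨hcard, hbetter⟩
  · have : 1 ≤ M.colSumStrict (M.incidence μ) w f := by
      have hi' : i ∈ Finset.univ.filter (M.prefW w · f) :=
        Finset.mem_filter.2 ⟨mem_univ i, hi⟩
      have := Finset.single_le_sum (fun i _ => incidence_nonneg (M := M) (μ := μ) i w) hi'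
      rwa [show M.incidence μ i w = 1 from if_pos hwi] at this
    nlinarith
  · have : (M.q f : ℝ) ≤ M.rowSumStrict (M.incidence μ) f w := by
      rw [rowSumStrict, sum_incidence_row, Finset.filter_filter]
      have : (Finset.univ.filter fun j => M.prefF f j w ∧ j ∈ μ f) = μ f := by
        ext j
        simpa using fun hj => hbetter j hj
      rw [this]
      exact_mod_cast hcard
    nlinarith

theorem convex_setOf_scp : Convex ℝ {x : F → W → ℝ | M.SCP x} := by
  rintro x ⟨hx0, hxF, hxW, hxA, hxS⟩ y ⟨hy0, hyF, hyW, hyA, hyS⟩ a b ha hb hab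
  simp only [Set.mem_ofPred_eq, SCP, rowSumStrict, colSumStrict, Pi.add_apply, Pi.smul_apply,
    smul_eq_mul, Finset.sum_add_distrib, ← Finset.mul_sum]
  refine ⟨fun f w => ?_, fun f => ?_, fun w => ?_, fun f w h => ?_, fun f w h => ?_⟩
  · exact add_nonneg (mul_nonneg ha (hx0 f w)) (mul_nonneg hb (hy0 f w))
  · exact convex_Iic (M.q f : ℝ) (hxF f) (hyF f) ha hb hab
  · exact convex_Iic (1 : ℝ) (hxW w) (hyW w) ha hb hab
  · simp [hxA f w h, hyA f w h]
  · have hcomb := convex_Ici (M.q f : ℝ) (hxS f w h) (hyS f w h) ha hb hab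
    simp only [Set.mem_Ici, smul_eq_mul, rowSumStrict, colSumStrict] at hcomb
    linear_combination hcomb

theorem strongCondAt_smul_add_smul (hμ : M.isMatching μ) (hν : M.isMatching ν) {f : F} {w : W}
    (h : (M.FirmFullAbove μ f w ∧ M.FirmFullAbove ν f w) ∨
      (M.WorkerMatchedAbove μ w f ∧ M.WorkerMatchedAbove ν w f))
    {a b : ℝ} (hab : a + b = 1) :
    M.StrongCondAt (a • M.incidence μ + b • M.incidence ν) f w := by
  have hrow : M.rowSumAbove (a • M.incidence μ + b • M.incidence ν) f w =
      a * M.rowSumAbove (M.incidence μ) f w + b * M.rowSumAbove (M.incidence ν) f w := by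
    simp only [rowSumAbove, Pi.add_apply, Pi.smul_apply, smul_eq_mul, Finset.sum_add_distrib,
      ← Finset.mul_sum]
  have hcol : M.colSumAbove (a • M.incidence μ + b • M.incidence ν) w f =
      a * M.colSumAbove (M.incidence μ) w f + b * M.colSumAbove (M.incidence ν) w f := by
    simp only [colSumAbove, Pi.add_apply, Pi.smul_apply, smul_eq_mul, Finset.sum_add_distrib,
      ← Finset.mul_sum]
  rw [StrongCondAt, hrow, hcol, mul_eq_zero]
  rcases h with ⟨hfμ, hfν⟩ | ⟨hwμ, hwν⟩
  · rw [rowSumAbove_incidence_of_firmFullAbove hfμ, rowSumAbove_incidence_of_firmFullAbove hfν]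
    left
    linear_combination (M.q f : ℝ) * (-hab)
  · rw [colSumAbove_incidence_of_workerMatchedAbove hμ hwμ,
      colSumAbove_incidence_of_workerMatchedAbove hν hwν]
    right
    linear_combination -hab

end Market

/-- In the market of Example 1, `μ_F` and `μ_W` are stable, and every convex
combination of their incidence vectors is a strongly stable fractional matching. -/
theorem example_convex_combinations_strongly_stable :
    exMarket.isStable exMuF ∧ exMarket.isStable exMuW ∧
    ∀ α : ℝ, 0 ≤ α → α ≤ 1 →
      exMarket.StronglyStable
        (fun f w => α * exMarket.incidence exMuF f w +
          (1 - α) * exMarket.incidence exMuW f w) := by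
  obtain ⟨hF, hW⟩ : exMarket.isStable exMuF ∧ exMarket.isStable exMuW := by
    simp only [Market.isStable, Market.isMatching, Market.indivRational,
      Market.blocks, Market.acceptable, exMarket]
    decide
  have hsat : ∀ f w, (exMarket.FirmFullAbove exMuF f w ∧ exMarket.FirmFullAbove exMuW f w) ∨
      (exMarket.WorkerMatchedAbove exMuF w f ∧ exMarket.WorkerMatchedAbove exMuW w f) := by
    simp only [Market.FirmFullAbove, Market.WorkerMatchedAbove, Market.weakF, Market.weakW,
      exMarket]
    decide
  refine ⟨hF, hW, fun α h0 h1 => ⟨?_, fun f w _ => ?_⟩⟩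
  · exact Market.convex_setOf_scp hF.scp_incidence hW.scp_incidence h0 (by linarith) (by ring)
  · exact Market.strongCondAt_smul_add_smul hF.1 hW.1 (hsat f w) (by ring)
end
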